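/- arXiv:1804.07104 — 4 statements merged into one kernel-verified Lean document; each statement's English description precedes it below -/
import Mathlib

section
/- For every positive integer n ≥ 1, the set of integers {1, 2, ..., 2n} can be partitioned into n pairs {a_i, b_i} (i = 1, ..., n) such that a_i + b_i is a prime number for every i. -/
lemma greenfield_aux : ∀ N : ℕ, Even N → ∃ P : Finset (Finset ℕ),
    P.card * 2 = N ∧
    (∀ s ∈ P, s.card = 2) ∧
    (∀ s ∈ P, ∀ t ∈ P, s ≠ t → Disjoint s t) ∧
    P.biUnion id = Finset.Icc 1 N ∧
    (∀ s ∈ P, Nat.Prime (∑ x ∈ s, x)) := by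
  intro N
  induction N using Nat.strong_induction_on with
  | _ N ih =>
    intro hN
    rcases Nat.eq_zero_or_pos N with h0 | hpos
    · subst h0
      refine ⟨∅, by simp⟩
    have hN2 : 2 ≤ N := by obtain ⟨t, ht⟩ := hN; omega
    obtain ⟨p, hp, hNp, hp2N⟩ := Nat.exists_prime_lt_and_le_two_mul N (by omega)
    have hpodd : Odd p := hp.odd_of_ne_two (by omega)
    have hplt : p < 2 * N := by
      rcases lt_or_eq_of_le hp2N with h | h
      · exact h
      · exfalso
        have : p = 2 := (Nat.Prime.even_iff hp).mp ⟨N, by omega⟩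
        omega
    obtain ⟨k, hk⟩ := hpodd
    set m := p - N with hm
    have hm1 : 1 ≤ m := by omega
    have hmk : m ≤ k := by omega
    have hkN : k ≤ N - 1 := by omega
    have hmodd : m % 2 = 1 := by obtain ⟨t, ht⟩ := hN; omega
    obtain ⟨P₀, hc0, h20, hd0, hu0, hp0⟩ := ih (m - 1) (by omega) ⟨(m - 1) / 2, by omega⟩
    set Q : Finset (Finset ℕ) := (Finset.Icc m k).image (fun j => ({j, p - j} : Finset ℕ)) with hQ
    have memQ : ∀ s ∈ Q, ∃ j, m ≤ j ∧ j ≤ k ∧ s = {j, p - j} := by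
      intro s hs
      simp only [hQ, Finset.mem_image, Finset.mem_Icc] at hs
      obtain ⟨j, ⟨h1, h2⟩, h3⟩ := hs
      exact ⟨j, h1, h2, h3.symm⟩
    have hsub0 : ∀ s ∈ P₀, ∀ x ∈ s, x ∈ Finset.Icc 1 (m - 1) := by
      intro s hs x hx
      rw [← hu0]
      exact Finset.mem_biUnion.mpr ⟨s, hs, hx⟩
    have hPQdisj : Disjoint P₀ Q := by
      rw [Finset.disjoint_left]
      intro s hs hsQ
      obtain ⟨j, hj1, hj2, rfl⟩ := memQ s hsQ
      have := hsub0 _ hs j (by simp)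
      simp only [Finset.mem_Icc] at this
      omega
    have hcardQ : Q.card = k + 1 - m := by
      rw [hQ, Finset.card_image_of_injOn, Nat.card_Icc]
      intro a ha b hb hab
      simp only [Finset.coe_Icc, Set.mem_Icc] at ha hb
      have : a ∈ ({b, p - b} : Finset ℕ) := by simp only at hab; rw [← hab]; simp
      simp only [Finset.mem_insert, Finset.mem_singleton] at this
      omega
    refine ⟨P₀ ∪ Q, ?_, ?_, ?_, ?_, ?_⟩
    · rw [Finset.card_union_of_disjoint hPQdisj, hcardQ]
      omega
    · intro s hs
      rcases Finset.mem_union.mp hs with h | h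
      · exact h20 s h
      · obtain ⟨j, hj1, hj2, rfl⟩ := memQ s h
        exact Finset.card_pair (by omega)
    · intro s hs t ht hst
      rcases Finset.mem_union.mp hs with h1 | h1 <;> rcases Finset.mem_union.mp ht with h2 | h2
      · exact hd0 s h1 t h2 hst
      · rw [Finset.disjoint_left]
        intro x hx hxt
        obtain ⟨j, hj1, hj2, rfl⟩ := memQ t h2
        have := hsub0 _ h1 x hx
        simp only [Finset.mem_Icc] at this
        simp only [Finset.mem_insert, Finset.mem_singleton] at hxt
        omega
      · rw [Finset.disjoint_left]
        intro x hx hxt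
        obtain ⟨j, hj1, hj2, rfl⟩ := memQ s h1
        have := hsub0 _ h2 x hxt
        simp only [Finset.mem_Icc] at this
        simp only [Finset.mem_insert, Finset.mem_singleton] at hx
        omega
      · obtain ⟨j, hj1, hj2, rfl⟩ := memQ s h1
        obtain ⟨j', hj'1, hj'2, rfl⟩ := memQ t h2
        rw [Finset.disjoint_left]
        intro x hx hxt
        simp only [Finset.mem_insert, Finset.mem_singleton] at hx hxt
        apply hst
        have : j = j' := by omega
        subst this
        rfl
    · ext x
      simp only [Finset.mem_biUnion, Finset.mem_union, id_eq, Finset.mem_Icc]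
      constructor
      · rintro ⟨s, hs | hs, hxs⟩
        · have := hsub0 s hs x hxs
          simp only [Finset.mem_Icc] at this
          omega
        · obtain ⟨j, hj1, hj2, rfl⟩ := memQ s hs
          simp only [Finset.mem_insert, Finset.mem_singleton] at hxs
          omega
      · intro hx
        by_cases hxm : x ≤ m - 1
        · have : x ∈ P₀.biUnion id := by
            rw [hu0]; simp only [Finset.mem_Icc]; omega
          obtain ⟨s, hs, hxs⟩ := Finset.mem_biUnion.mp this
          exact ⟨s, Or.inl hs, hxs⟩
        · by_cases hxk : x ≤ k
          · refine ⟨{x, p - x}, Or.inr ?_, by simp⟩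
            simp only [hQ, Finset.mem_image, Finset.mem_Icc]
            exact ⟨x, ⟨by omega, hxk⟩, rfl⟩
          · refine ⟨{p - x, p - (p - x)}, Or.inr ?_, ?_⟩
            · simp only [hQ, Finset.mem_image, Finset.mem_Icc]
              exact ⟨p - x, ⟨by omega, by omega⟩, rfl⟩
            · simp only [Finset.mem_insert, Finset.mem_singleton]
              omega
    · intro s hs
      rcases Finset.mem_union.mp hs with h | h
      · exact hp0 s h
      · obtain ⟨j, hj1, hj2, rfl⟩ := memQ s h
        rw [Finset.sum_pair (by omega)]
        have : j + (p - j) = p := by omega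
        rwa [this]

/-- The set `{1, 2, ..., 2n}` can be partitioned into `n` pairs, the sum of
each pair being a prime number. -/
theorem greenfield_partition (n : ℕ) (hn : 1 ≤ n) :
    ∃ P : Finset (Finset ℕ),
      P.card = n ∧
      (∀ s ∈ P, s.card = 2) ∧
      (∀ s ∈ P, ∀ t ∈ P, s ≠ t → Disjoint s t) ∧
      P.biUnion id = Finset.Icc 1 (2 * n) ∧
      (∀ s ∈ P, Nat.Prime (∑ x ∈ s, x)) := by
  obtain ⟨P, hc, h2, hd, hu, hp⟩ := greenfield_aux (2 * n) ⟨n, by ring⟩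
  exact ⟨P, by omega, h2, hd, hu, hp⟩
end

section
/- For every positive integer n ≥ 1, the prime sum graph G_{2n} has a perfect matching. -/
/-- The prime sum graph of order `m`: vertices are `{1, ..., m}`, and two distinct
vertices are adjacent iff their sum is prime. -/
def primeSumGraph (m : ℕ) : SimpleGraph (Finset.Icc 1 m) where
  Adj i j := i ≠ j ∧ Nat.Prime (i.1 + j.1)
  symm := by
    constructor
    rintro i j ⟨h1, h2⟩
    exact ⟨h1.symm, by rwa [Nat.add_comm]⟩
  loopless := by constructor; rintro i ⟨h, _⟩; exact h rfl

/-!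
By Bertrand's postulate there is a prime `p` with `2n < p ≤ 4n`. Pairing `k` with `p - k`
matches `{p - 2n, ..., 2n}` into pairs of sum `p`; as `p` is odd, what is left over is
`{1, ..., p - 2n - 1}`, an interval of even length shorter than `2n`, which is matched by
induction.
-/

theorem SimpleGraph.exists_isPerfectMatching_of_involutive {V : Type*} {G : SimpleGraph V}
    {σ : V → V} (hσ : Function.Involutive σ) (hadj : ∀ v, G.Adj v (σ v)) :
    ∃ M : G.Subgraph, M.IsPerfectMatching := by
  let M : G.Subgraph :=
    { verts := Set.univ
      Adj := fun v w => σ v = w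
      adj_sub := by rintro v _ rfl; exact hadj v
      edge_vert := fun _ => trivial
      symm := ⟨by rintro v _ rfl; exact hσ v⟩ }
  exact ⟨M, M.isPerfectMatching_iff.2 fun v => ⟨σ v, rfl, fun _ h => Eq.symm h⟩⟩

def IsPrimeSumPairing (m : ℕ) (f : ℕ → ℕ) : Prop :=
  ∀ k ∈ Finset.Icc 1 m, f k ∈ Finset.Icc 1 m ∧ f (f k) = k ∧ f k ≠ k ∧ (k + f k).Prime

theorem IsPrimeSumPairing.reflect {m p : ℕ} {g : ℕ → ℕ} (hp : p.Prime) (hp_odd : Odd p)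
    (hmp : m < p) (hpm : p ≤ 2 * m) (hg : IsPrimeSumPairing (p - m - 1) g) :
    IsPrimeSumPairing m fun k => if k < p - m then g k else p - k := by
  have hp_odd := Nat.odd_iff.1 hp_odd
  intro k hk
  rw [Finset.mem_Icc] at hk
  by_cases hkl : k < p - m
  · obtain ⟨hgk, hggk, hgk_ne, hgk_prime⟩ := hg k (Finset.mem_Icc.2 (by omega))
    rw [Finset.mem_Icc] at hgk
    simp only [if_pos hkl, if_pos (show g k < p - m by omega)]
    exact ⟨Finset.mem_Icc.2 (by omega), hggk, hgk_ne, hgk_prime⟩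
  · simp only [if_neg hkl, if_neg (show ¬p - k < p - m by omega), Finset.mem_Icc]
    refine ⟨by omega, by omega, by omega, ?_⟩
    rwa [Nat.add_sub_cancel' (by omega)]

theorem exists_isPrimeSumPairing_two_mul (n : ℕ) : ∃ f, IsPrimeSumPairing (2 * n) f := by
  induction n using Nat.strong_induction_on with
  | _ n ih =>
    rcases Nat.eq_zero_or_pos n with rfl | hn
    · exact ⟨id, fun k hk => by simp at hk⟩
    obtain ⟨p, hp, hnp, hpn⟩ := Nat.exists_prime_lt_and_le_two_mul (2 * n) (by omega)
    have hp_odd : Odd p := hp.odd_of_ne_two (by omega)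
    have hrest : p - 2 * n - 1 = 2 * ((p - 2 * n - 1) / 2) := by
      have := Nat.odd_iff.1 hp_odd
      omega
    obtain ⟨g, hg⟩ := ih ((p - 2 * n - 1) / 2) (by omega)
    rw [← hrest] at hg
    exact ⟨_, hg.reflect hp hp_odd hnp (by omega)⟩

theorem primeSumGraph_perfect_matching_general (n : ℕ) :
    ∃ M : (primeSumGraph (2 * n)).Subgraph, M.IsPerfectMatching := by
  obtain ⟨f, hf⟩ := exists_isPrimeSumPairing_two_mul n
  let σ : Finset.Icc 1 (2 * n) → Finset.Icc 1 (2 * n) := fun k => ⟨f k, (hf k k.2).1⟩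
  refine SimpleGraph.exists_isPerfectMatching_of_involutive (σ := σ) ?_ fun k => ?_
  · exact fun k => Subtype.ext (hf k k.2).2.1
  · exact ⟨fun h => (hf k k.2).2.2.1 (congrArg Subtype.val h).symm, (hf k k.2).2.2.2⟩

/-- The prime sum graph `G_{2n}` has a perfect matching for every `n ≥ 1`. -/
theorem primeSumGraph_perfect_matching (n : ℕ) (hn : 1 ≤ n) :
    ∃ M : (primeSumGraph (2 * n)).Subgraph, M.IsPerfectMatching :=
  primeSumGraph_perfect_matching_general n
end

section
/- Let n ≥ 2 and let p_1 < p_2 be two integers in [1, 2n], each of which is either 1 or a prime, such that 2n + p_1 and 2n + p_2 are both prime and gcd((p_2 − p_1)/2, n) = 1. Then the prime sum graph G_{2n} contains a Hamilton cycle. -/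
/-!
Identify each vertex with its residue modulo `2n` and put `d = (p₂ - p₁) / 2`. Walk along the
zigzag of residues `1, p₁ - 1, 1 + 2d, p₁ - 1 - 2d, 1 + 4d, …`: consecutive residues sum
alternately to `p₁` and to `p₁ + 2d = p₂`. Two vertices of `{1, …, 2n}` whose sum is `p` modulo
`2n` sum to `p` (impossible for `p = 1`) or to `2n + p`, a prime either way. As `d` is
invertible modulo `n`, the odd terms `1 + 2jd` and the even terms `p₁ - 1 - 2jd` (`0 ≤ j < n`)
each run once through their parity class, so the first `2n` terms visit every vertex once, and
the zigzag closes up.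
-/

open Function

namespace SimpleGraph

variable {V : Type*} [Fintype V] [DecidableEq V] {G : SimpleGraph V}

theorem exists_isHamiltonianCycle_of_bijective {N : ℕ} [NeZero N] (hN : 3 ≤ N)
    (f : Fin N → V) (hf : Bijective f) (hadj : ∀ i, G.Adj (f i) (f (i + 1))) :
    ∃ a, ∃ p : G.Walk a a, p.IsHamiltonianCycle := by
  obtain ⟨m, rfl⟩ : ∃ m, N = m + 3 := ⟨N - 3, by omega⟩
  let φ : cycleGraph (m + 3) →g G :=
    { toFun := f
      map_rel' := fun {u v} huv => by
        rcases cycleGraph_adj.1 huv with h | h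
        · rw [sub_eq_iff_eq_add'.1 h]; exact (hadj v).symm
        · rw [sub_eq_iff_eq_add'.1 h]; exact hadj u }
  refine ⟨f 0, (cycleGraph.cycle m).map φ, ?_⟩
  rw [Walk.isHamiltonianCycle_iff_isCycle_and_length_eq]
  refine ⟨(Walk.isCycle_map_iff_of_injective hf.injective).2 cycleGraph.isCycle_cycle, ?_⟩
  rw [Walk.length_map, cycleGraph.length_cycle, ← Fintype.card_of_bijective hf, Fintype.card_fin]

end SimpleGraph

theorem Nat.ModEq.cancel_right_of_modEq_of_coprime {a n d i j : ℕ} (hij : i ≡ j [MOD a])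
    (hd : d.Coprime n) (h : i * d ≡ j * d [MOD a * n]) : i ≡ j [MOD a * n] := by
  rw [Nat.modEq_iff_dvd] at hij h ⊢
  obtain ⟨t, ht⟩ := hij
  push_cast at h ⊢
  rw [← sub_mul, ht, mul_assoc] at h
  rcases eq_or_ne (a : ℤ) 0 with ha | ha
  · simp [ht, ha]
  have htd : (n : ℤ) ∣ t * d := (mul_dvd_mul_iff_left ha).1 h
  rw [ht]
  exact mul_dvd_mul_left _ ((Nat.isCoprime_iff_coprime.2 hd).symm.dvd_of_dvd_mul_right htd)

theorem Nat.odd_of_prime_two_mul_add {n p : ℕ} (hn : 2 ≤ n) (h : (2 * n + p).Prime) : Odd p :=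
  (Nat.odd_add'.1 (h.odd_of_ne_two (by omega))).2 (even_two_mul n)

namespace ZMod

variable {N : ℕ} [NeZero N]

def toIcc (r : ZMod N) : Finset.Icc 1 N :=
  ⟨(r - 1).val + 1, Finset.mem_Icc.2 ⟨Nat.le_add_left _ _, (r - 1).val_lt⟩⟩

@[simp]
theorem natCast_toIcc (r : ZMod N) : ((toIcc r : ℕ) : ZMod N) = r := by
  simp [toIcc]

theorem toIcc_injective : Injective (toIcc : ZMod N → Finset.Icc 1 N) :=
  LeftInverse.injective (g := fun v : Finset.Icc 1 N => ((v : ℕ) : ZMod N)) natCast_toIcc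

end ZMod

theorem primeSumGraph_adj_of_natCast_add_eq {N p : ℕ} {u v : Finset.Icc 1 N} (huv : u ≠ v)
    (hp : p = 1 ∨ p.Prime) (hpN : p < N) (hNp : (N + p).Prime)
    (h : ((u + v : ℕ) : ZMod N) = p) : (primeSumGraph N).Adj u v := by
  refine ⟨huv, ?_⟩
  have hu := Finset.mem_Icc.1 u.2
  have hv := Finset.mem_Icc.1 v.2
  have hp1 : 1 ≤ p := by rcases hp with rfl | hp; exacts [le_rfl, hp.one_lt.le]
  rw [ZMod.natCast_eq_natCast_iff', Nat.mod_eq_of_lt hpN] at h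
  have hsum : (u + v : ℕ) = p ∨ (u + v : ℕ) = N + p := by
    have hdiv := Nat.div_add_mod (u + v : ℕ) N
    have hq : (u + v : ℕ) / N ≤ 2 := Nat.div_le_of_le_mul (by omega)
    interval_cases (u + v : ℕ) / N <;> omega
  rcases hsum with hsum | hsum <;> rw [hsum]
  · exact hp.resolve_left (by omega)
  · exact hNp

/-- The residue of the `k`-th vertex of the cycle: `1 + 2jd` for `k = 2j` and `p - 1 - 2jd`
for `k = 2j + 1`. -/
def zigzag (N p d k : ℕ) : ZMod N :=
  if Even k then 1 + k * d else p - 1 + d - k * d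

section zigzag

variable {N p d : ℕ}

theorem zigzag_add_zigzag_succ (k : ℕ) :
    zigzag N p d k + zigzag N p d (k + 1) = if Even k then (p : ZMod N) else p + 2 * d := by
  by_cases hk : Even k
  · simp [zigzag, hk, Nat.even_add_one]
    ring
  · simp [zigzag, hk, Nat.even_add_one]
    ring

theorem zigzag_mod (hN : Even N) (k : ℕ) : zigzag N p d (k % N) = zigzag N p d k := by
  have hpar : Even (k % N) ↔ Even k := by
    obtain ⟨m, rfl⟩ := hN
    rw [← two_mul, Nat.even_iff, Nat.even_iff, Nat.mod_mul_right_mod]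
  simp [zigzag, hpar]

theorem castHom_zigzag (n : ℕ) (hp : Odd p) (k : ℕ) :
    ZMod.castHom (dvd_mul_right 2 n) (ZMod 2) (zigzag (2 * n) p d k) =
      if Even k then 1 else 0 := by
  by_cases hk : Even k
  · simp [zigzag, hk, ZMod.natCast_eq_zero_iff_even.2 hk]
  · simp [zigzag, hk, ZMod.natCast_eq_one_iff_odd.2 hp,
      ZMod.natCast_eq_one_iff_odd.2 (Nat.not_even_iff_odd.1 hk)]

theorem zigzag_injOn {n : ℕ} (hp : Odd p) (hd : d.Coprime n) :
    Set.InjOn (zigzag (2 * n) p d) (Set.Iio (2 * n)) := by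
  intro i hi j hj h
  have hpar : Even i ↔ Even j := by
    have := congrArg (ZMod.castHom (dvd_mul_right 2 n) (ZMod 2)) h
    rw [castHom_zigzag n hp, castHom_zigzag n hp] at this
    by_cases hi : Even i <;> by_cases hj : Even j <;> simp [hi, hj] at this ⊢
  have hmul : ((i * d : ℕ) : ZMod (2 * n)) = (j * d : ℕ) := by
    by_cases hi : Even i
    · simpa [zigzag, hi, hpar.1 hi] using h
    · simpa [zigzag, hi, mt hpar.2 hi] using h
  refine Nat.ModEq.eq_of_lt_of_lt ?_ hi hj
  refine Nat.ModEq.cancel_right_of_modEq_of_coprime ?_ hd ((ZMod.natCast_eq_natCast_iff ..).1 hmul)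
  rw [Nat.even_iff, Nat.even_iff] at hpar
  change i % 2 = j % 2
  omega

end zigzag

theorem primeSumGraph_hamiltonian_of_two_primes_general (n p₁ p₂ : ℕ) (hn : 2 ≤ n)
    (hp₂_ub : p₂ ≤ 2 * n) (hlt : p₁ < p₂)
    (hp₁ : p₁ = 1 ∨ Nat.Prime p₁) (hp₂ : p₂ = 1 ∨ Nat.Prime p₂)
    (hq₁ : Nat.Prime (2 * n + p₁)) (hq₂ : Nat.Prime (2 * n + p₂))
    (hgcd : Nat.gcd ((p₂ - p₁) / 2) n = 1) :
    ∃ a, ∃ w : (primeSumGraph (2 * n)).Walk a a, w.IsHamiltonianCycle := by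
  have : NeZero (2 * n) := ⟨by omega⟩
  have hodd₁ := Nat.odd_of_prime_two_mul_add hn hq₁
  have hodd₂ := Nat.odd_of_prime_two_mul_add hn hq₂
  set d := (p₂ - p₁) / 2
  have hp₂_eq : p₂ = p₁ + 2 * d := by
    obtain ⟨a, ha⟩ := hodd₁
    obtain ⟨b, hb⟩ := hodd₂
    omega
  have hp₂_lt : p₂ < 2 * n := by
    obtain ⟨b, hb⟩ := hodd₂
    omega
  let f (i : Fin (2 * n)) := ZMod.toIcc (zigzag (2 * n) p₁ d i)
  have hf : Bijective f := by
    refine (Fintype.bijective_iff_injective_and_card f).2 ⟨fun i j hij => ?_, by simp⟩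
    exact Fin.ext (zigzag_injOn hodd₁ hgcd i.2 j.2 (ZMod.toIcc_injective hij))
  refine SimpleGraph.exists_isHamiltonianCycle_of_bijective (by omega) f hf fun i => ?_
  have hsucc : ((i + 1 : Fin (2 * n)) : ℕ) = (i + 1) % (2 * n) := by
    rw [Fin.val_add, Fin.val_one', Nat.add_mod_mod]
  have hsum : ((f i + f (i + 1) : ℕ) : ZMod (2 * n)) = if Even (i : ℕ) then p₁ else p₂ := by
    push_cast
    simp only [f, ZMod.natCast_toIcc, hsucc, zigzag_mod (even_two_mul n), zigzag_add_zigzag_succ]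
    split_ifs <;> simp [hp₂_eq]
  have hne : f i ≠ f (i + 1) := hf.injective.ne (by simp)
  split_ifs at hsum
  · exact primeSumGraph_adj_of_natCast_add_eq hne hp₁ (by omega) hq₁ hsum
  · exact primeSumGraph_adj_of_natCast_add_eq hne hp₂ hp₂_lt hq₂ hsum

/-- If there exist `p₁ < p₂` in `[1, 2n]`, each equal to `1` or prime, such that
`2n + p₁` and `2n + p₂` are primes and `gcd((p₂ - p₁)/2, n) = 1`, then the prime
sum graph `G_{2n}` contains a Hamilton cycle. -/
theorem primeSumGraph_hamiltonian_of_two_primes (n p₁ p₂ : ℕ) (hn : 2 ≤ n)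
    (hp₁_lb : 1 ≤ p₁) (hp₂_ub : p₂ ≤ 2 * n) (hlt : p₁ < p₂)
    (hp₁ : p₁ = 1 ∨ Nat.Prime p₁) (hp₂ : p₂ = 1 ∨ Nat.Prime p₂)
    (hq₁ : Nat.Prime (2 * n + p₁)) (hq₂ : Nat.Prime (2 * n + p₂))
    (hgcd : Nat.gcd ((p₂ - p₁) / 2) n = 1) :
    ∃ a, ∃ w : (primeSumGraph (2 * n)).Walk a a, w.IsHamiltonianCycle :=
  primeSumGraph_hamiltonian_of_two_primes_general n p₁ p₂ hn hp₂_ub hlt hp₁ hp₂ hq₁ hq₂ hgcd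
end

section
/- Let n ≥ 1 and let p be an odd positive integer with 1 ≤ p ≤ 2n such that 2n + p is prime. Then the set of pairs {u, v} of distinct elements of {1, ..., 2n} with u + v = p or u + v = 2n + p forms a perfect matching of {1, ..., 2n}: every element of {1, ..., 2n} belongs to exactly one such pair. -/
/-- If `p` is odd with `1 ≤ p ≤ 2n` and `2n + p` is prime, then the pairs of
distinct elements of `{1, ..., 2n}` summing to `p` or to `2n + p` form a perfect
matching of `{1, ..., 2n}`: every element belongs to exactly one such pair. -/
theorem pairs_summing_to_p_or_2n_add_p_perfect_matching (n p : ℕ) (hn : 1 ≤ n)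
    (hp_odd : Odd p) (hp1 : 1 ≤ p) (hp2 : p ≤ 2 * n) (hprime : Nat.Prime (2 * n + p)) :
    ∀ u ∈ Finset.Icc 1 (2 * n), ∃! v : ℕ, v ∈ Finset.Icc 1 (2 * n) ∧ v ≠ u ∧
      (u + v = p ∨ u + v = 2 * n + p) := by
  intro u hu
  simp only [Finset.mem_Icc] at hu
  obtain ⟨k, hk⟩ := hp_odd
  rcases lt_or_ge u p with h | h
  · refine ⟨p - u, ⟨Finset.mem_Icc.2 ⟨by omega, by omega⟩, by omega, Or.inl (by omega)⟩, ?_⟩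
    rintro v ⟨hv, hne, hsum⟩
    simp only [Finset.mem_Icc] at hv
    omega
  · refine ⟨2 * n + p - u, ⟨Finset.mem_Icc.2 ⟨by omega, by omega⟩, by omega,
      Or.inr (by omega)⟩, ?_⟩
    rintro v ⟨hv, hne, hsum⟩
    simp only [Finset.mem_Icc] at hv
    omega
end
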